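/- arXiv:2108.08758 — 3 statements merged into one kernel-verified Lean document; each statement's English description precedes it below -/
import Mathlib

section
/- Two distinct inclusion-minimal maximizers of a quasi-concave set function over the nonempty proper subsets of a finite ground set are disjoint. -/
/-! The intersection of two overlapping maximizers is again a maximizer, by quasi-concavity;
by minimality it then coincides with each of them, so they are equal. -/

def IsMaximizer {X : Type*} [Fintype X] (F : Set X → ℝ) (S : Set X) : Prop :=
  S.Nonempty ∧ S ≠ Set.univ ∧ ∀ T : Set X, T.Nonempty → T ≠ Set.univ → F T ≤ F S

def IsMinimalMaximizer {X : Type*} [Fintype X] (F : Set X → ℝ) (S : Set X) : Prop :=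
  IsMaximizer F S ∧ ∀ T : Set X, T ⊂ S → ¬ IsMaximizer F T

section

variable {X : Type*} [Fintype X] {F : Set X → ℝ} {S T : Set X}

theorem IsMaximizer.inter (hS : IsMaximizer F S) (hT : IsMaximizer F T)
    (hqc : min (F S) (F T) ≤ F (S ∩ T)) (hST : (S ∩ T).Nonempty) :
    IsMaximizer F (S ∩ T) := by
  obtain ⟨-, hSu, hSmax⟩ := hS
  obtain ⟨-, -, hTmax⟩ := hT
  refine ⟨hST, fun h ↦ hSu (Set.eq_univ_of_univ_subset (h ▸ Set.inter_subset_left)),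
    fun U hU hUu ↦ ?_⟩
  calc F U ≤ min (F S) (F T) := le_min (hSmax U hU hUu) (hTmax U hU hUu)
    _ ≤ F (S ∩ T) := hqc

theorem IsMinimalMaximizer.eq_of_subset (hS : IsMinimalMaximizer F S) (hT : IsMaximizer F T)
    (hTS : T ⊆ S) : T = S := by
  by_contra h
  exact hS.2 T (hTS.ssubset_of_ne h) hT

end

theorem stmt1 {X : Type*} [Fintype X] (F : Set X → ℝ)
    (hqc : ∀ S T : Set X, min (F S) (F T) ≤ F (S ∩ T))
    (S₁ S₂ : Set X)
    (h₁ : IsMinimalMaximizer F S₁) (h₂ : IsMinimalMaximizer F S₂)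
    (hne : S₁ ≠ S₂) :
    Disjoint S₁ S₂ := by
  by_contra hd
  have hI : IsMaximizer F (S₁ ∩ S₂) :=
    h₁.1.inter h₂.1 (hqc S₁ S₂) (Set.not_disjoint_iff_nonempty_inter.1 hd)
  exact hne ((h₁.eq_of_subset hI Set.inter_subset_left).symm.trans
    (h₂.eq_of_subset hI Set.inter_subset_right))
end

section
/- If π is a monotone linkage function on a finite ground set X (π(x, S) ≥ π(x, T) whenever S ⊆ T and x ∉ T), then the induced set function M(T) = min_{x ∈ X \ T} π(x, T) is quasi-concave, i.e., M(S ∩ T) ≥ min(M(S), M(T)) for all nonempty proper subsets S, T of X with S ∩ T nonempty and proper. -/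
/- The minimiser `x` of `π · (S ∩ T)` lies outside `S` or outside `T`, say outside `S`. Then
`M(S) ≤ π x S ≤ π x (S ∩ T) = M(S ∩ T)`, the second step by monotonicity. -/

theorem inf'_sdiff_linkage_le {X : Type*} [Fintype X] [DecidableEq X] {π : X → Finset X → ℝ}
    (hmono : ∀ (x : X) (S T : Finset X), S ⊆ T → x ∉ T → π x T ≤ π x S)
    {S U : Finset X} (hUS : U ⊆ S) {x : X} (hx : x ∉ S) (hSc : (Finset.univ \ S).Nonempty) :
    (Finset.univ \ S).inf' hSc (fun y => π y S) ≤ π x U :=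
  calc (Finset.univ \ S).inf' hSc (fun y => π y S) ≤ π x S :=
        Finset.inf'_le _ (Finset.mem_sdiff.mpr ⟨Finset.mem_univ x, hx⟩)
    _ ≤ π x U := hmono x U S hUS hx

theorem stmt2_general {X : Type*} [Fintype X] [DecidableEq X] (π : X → Finset X → ℝ)
    (hmono : ∀ (x : X) (S T : Finset X), S ⊆ T → x ∉ T → π x T ≤ π x S)
    (S T : Finset X)
    (hSc : (Finset.univ \ S).Nonempty) (hTc : (Finset.univ \ T).Nonempty)
    (hSTc : (Finset.univ \ (S ∩ T)).Nonempty) :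
    min ((Finset.univ \ S).inf' hSc fun x => π x S)
        ((Finset.univ \ T).inf' hTc fun x => π x T)
      ≤ (Finset.univ \ (S ∩ T)).inf' hSTc fun x => π x (S ∩ T) := by
  obtain ⟨x, hx, hx_min⟩ := Finset.exists_mem_eq_inf' hSTc fun x => π x (S ∩ T)
  rw [hx_min]
  have hx_notMem : x ∉ S ∩ T := (Finset.mem_sdiff.mp hx).2
  by_cases hxS : x ∈ S
  · have hxT : x ∉ T := fun hxT => hx_notMem (Finset.mem_inter.mpr ⟨hxS, hxT⟩)
    exact min_le_of_right_le (inf'_sdiff_linkage_le hmono Finset.inter_subset_right hxT hTc)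
  · exact min_le_of_left_le (inf'_sdiff_linkage_le hmono Finset.inter_subset_left hxS hSc)

theorem stmt2 {X : Type*} [Fintype X] [DecidableEq X] (π : X → Finset X → ℝ)
    (hmono : ∀ (x : X) (S T : Finset X), S ⊆ T → x ∉ T → π x T ≤ π x S)
    (S T : Finset X) (hS : S.Nonempty) (hS' : S ≠ Finset.univ)
    (hT : T.Nonempty) (hT' : T ≠ Finset.univ)
    (hST : (S ∩ T).Nonempty) (hST' : S ∩ T ≠ Finset.univ)
    (hSc : (Finset.univ \ S).Nonempty) (hTc : (Finset.univ \ T).Nonempty)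
    (hSTc : (Finset.univ \ (S ∩ T)).Nonempty) :
    min ((Finset.univ \ S).inf' hSc fun x => π x S)
        ((Finset.univ \ T).inf' hTc fun x => π x T)
      ≤ (Finset.univ \ (S ∩ T)).inf' hSTc fun x => π x (S ∩ T) :=
  stmt2_general π hmono S T hSc hTc hSTc
end

section
/- Let π be a monotone linkage function on finite set X with |X| = N, and let s = (x₁, …, x_N) be a π-series, i.e., for each k, π(x_{k+1}, {x₁,…,x_k}) = min over y ∉ {x₁,…,x_k} of π(y, {x₁,…,x_k}). If a subset S ⊆ X contains x₁ and x_{k+1} is the first element of the series not in S, then M(S̄_k) ≥ M(S), where S̄_k = {x₁,…,x_k} and M(T) = min_{y ∉ T} π(y, T). -/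
/-- The prefix `{x₁, …, x_k}` of an enumeration `x` of a finite set. -/
def prefixSet {X : Type*} [DecidableEq X] {N : ℕ} (x : Fin N ≃ X) (k : ℕ) : Finset X :=
  (Finset.univ.filter fun i : Fin N => (i : ℕ) < k).image x

open Finset

theorem prefixSet_subset {X : Type*} [DecidableEq X] {N : ℕ} (x : Fin N ≃ X) (k : ℕ)
    {S : Finset X} (h : ∀ i : Fin N, (i : ℕ) < k → x i ∈ S) : prefixSet x k ⊆ S := by
  intro y hy
  obtain ⟨i, hi, rfl⟩ := mem_image.mp hy
  exact h i (mem_filter.mp hi).2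

theorem inf'_sdiff_le_inf'_sdiff_of_minimizer {X : Type*} [Fintype X] [DecidableEq X]
    (π : X → Finset X → ℝ)
    (hmono : ∀ (x : X) (S T : Finset X), S ⊆ T → x ∉ T → π x T ≤ π x S)
    {S T : Finset X} (hTS : T ⊆ S) {y : X} (hyS : y ∉ S)
    (hmin : ∀ z ∉ T, π y T ≤ π z T)
    (hS : (univ \ S).Nonempty) (hT : (univ \ T).Nonempty) :
    (univ \ S).inf' hS (fun z => π z S) ≤ (univ \ T).inf' hT (fun z => π z T) :=
  calc (univ \ S).inf' hS (fun z => π z S)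
      ≤ π y S := inf'_le _ (by simpa using hyS)
    _ ≤ π y T := hmono y T S hTS hyS
    _ ≤ (univ \ T).inf' hT (fun z => π z T) :=
      le_inf' _ _ fun z hz => hmin z (mem_sdiff.mp hz).2

theorem stmt5_general {X : Type*} [Fintype X] [DecidableEq X]
    (π : X → Finset X → ℝ)
    (hmono : ∀ (x : X) (S T : Finset X), S ⊆ T → x ∉ T → π x T ≤ π x S)
    (N : ℕ) (x : Fin N ≃ X)
    (hser : ∀ (k : ℕ) (hk : k < N), ∀ y : X, y ∉ prefixSet x k →
      π (x ⟨k, hk⟩) (prefixSet x k) ≤ π y (prefixSet x k))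
    (S : Finset X) (k : ℕ) (hk : k < N)
    (hpre : ∀ i : Fin N, (i : ℕ) < k → x i ∈ S)
    (hout : x ⟨k, hk⟩ ∉ S)
    (hScne : (Finset.univ \ S).Nonempty)
    (hPkc : (Finset.univ \ prefixSet x k).Nonempty) :
    (Finset.univ \ S).inf' hScne (fun y => π y S)
      ≤ (Finset.univ \ prefixSet x k).inf' hPkc (fun y => π y (prefixSet x k)) :=
  inf'_sdiff_le_inf'_sdiff_of_minimizer π hmono (prefixSet_subset x k hpre) hout
    (hser k hk) hScne hPkc

theorem stmt5 {X : Type*} [Fintype X] [DecidableEq X]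
    (π : X → Finset X → ℝ)
    (hmono : ∀ (x : X) (S T : Finset X), S ⊆ T → x ∉ T → π x T ≤ π x S)
    (N : ℕ) (hN : N = Fintype.card X) (x : Fin N ≃ X)
    (hser : ∀ (k : ℕ) (hk : k < N), ∀ y : X, y ∉ prefixSet x k →
      π (x ⟨k, hk⟩) (prefixSet x k) ≤ π y (prefixSet x k))
    (S : Finset X) (k : ℕ) (hk : k < N) (hk1 : 1 ≤ k)
    (hpre : ∀ i : Fin N, (i : ℕ) < k → x i ∈ S)
    (hout : x ⟨k, hk⟩ ∉ S)
    (hScne : (Finset.univ \ S).Nonempty)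
    (hPkc : (Finset.univ \ prefixSet x k).Nonempty) :
    (Finset.univ \ S).inf' hScne (fun y => π y S)
      ≤ (Finset.univ \ prefixSet x k).inf' hPkc (fun y => π y (prefixSet x k)) :=
  stmt5_general π hmono N x hser S k hk hpre hout hScne hPkc
end
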